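/- FLOODING DP recursion correctness: for a dyadic interval D with halves D_L, D_R, filters F ≥ 0 and capacity c ≥ 0, let z_D(F,c) be the minimum of Σ_{D'∈S} g_{D'} over sets S of at most F pairwise-disjoint dyadic subintervals of D such that the unblocked traffic of D, T_D − Σ_{D'∈S}(g_{D'} + b_{D'}), is ≤ c (with value +∞ if no such S exists). Then for F ≥ 1 with D not a single address: z_D(F,c) = min( [g_D if 0 ≤ c], min over n=0..F, m=0..c of z_{D_L}(F−n, c−m) + z_{D_R}(n, m) ) where the first option (blocking D entirely, leaving 0 traffic) is available whenever F ≥ 1, traffic weights are natural numbers, and T_{D_L}, T_{D_R} denote total traffic in each half with T_D = T_{D_L} + T_{D_R}. -/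

import Mathlib

/-!
Dyadic intervals form a laminar family: a dyadic subinterval of `D` is `D` itself or lies in one
of its halves. A feasible set of filters for `D` therefore either contains `D`, and costs at least
`g_D` (while `{D}` alone is feasible, as blocking `D` leaves no traffic), or splits into feasible
sets for the two halves; filter count and unblocked traffic add up over the halves, which gives
the split `(F - n, c - m)`, `(n, m)`. Conversely, feasible sets for the disjoint halves combine
into one for `D`.
-/

/-- `ip` lies in the dyadic interval of prefix `q = (p, l)` in `w`-bit address space:
`[p·2^(w−l), (p+1)·2^(w−l))`. -/
def inI (w : ℕ) (q : ℕ × ℕ) (ip : ℕ) : Prop :=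
  q.1 * 2 ^ (w - q.2) ≤ ip ∧ ip < (q.1 + 1) * 2 ^ (w - q.2)

instance (w : ℕ) (q : ℕ × ℕ) (ip : ℕ) : Decidable (inI w q ip) := by
  unfold inI; infer_instance

/-- `(p, l)` is a valid prefix: `l ≤ w` and `p < 2^l`. -/
def ValidPrefix (w : ℕ) (q : ℕ × ℕ) : Prop := q.2 ≤ w ∧ q.1 < 2 ^ q.2

/-- The dyadic intervals of the prefixes in `S` are pairwise disjoint. -/
def PairwiseDisjointI (w : ℕ) (S : Finset (ℕ × ℕ)) : Prop :=
  ∀ q ∈ S, ∀ q' ∈ S, q ≠ q' → ∀ ip, ¬(inI w q ip ∧ inI w q' ip)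

/-- Good (whitelist) traffic of a prefix, natural-number weights. -/
def gN (w : ℕ) (WL : Finset ℕ) (wgt : ℕ → ℕ) (q : ℕ × ℕ) : ℕ :=
  ∑ ip ∈ WL.filter (fun ip => inI w q ip), wgt ip

/-- `zF w BL WL bw wgt D F c`: FLOODING optimum on `D`: minimum good traffic blocked by at
most `F` pairwise-disjoint dyadic subintervals of `D` leaving unblocked traffic `≤ c`;
`⊤` (i.e. `+∞`) if infeasible. -/
noncomputable def zF (w : ℕ) (BL WL : Finset ℕ) (bw wgt : ℕ → ℕ) (D : ℕ × ℕ)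
    (F c : ℕ) : WithTop ℕ :=
  sInf {x : WithTop ℕ | ∃ S : Finset (ℕ × ℕ),
    (∀ q ∈ S, ValidPrefix w q ∧ ∀ ip, inI w q ip → inI w D ip) ∧
    S.card ≤ F ∧ PairwiseDisjointI w S ∧
    (gN w WL wgt D + gN w BL bw D) -
        (∑ q ∈ S, (gN w WL wgt q + gN w BL bw q)) ≤ c ∧
    x = (∑ q ∈ S, gN w WL wgt q : ℕ)}


lemma inI_iff_div {w : ℕ} {q : ℕ × ℕ} {ip : ℕ} : inI w q ip ↔ ip / 2 ^ (w - q.2) = q.1 := by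
  rw [Nat.div_eq_iff (by positivity), inI, add_one_mul]
  have : 0 < 2 ^ (w - q.2) := by positivity
  omega

lemma inI_start (w : ℕ) (q : ℕ × ℕ) : inI w q (q.1 * 2 ^ (w - q.2)) := by
  rw [inI_iff_div, Nat.mul_div_cancel _ (by positivity)]

lemma eq_of_inI_of_inI {w a b k ip : ℕ} (ha : inI w (a, k) ip) (hb : inI w (b, k) ip) : a = b := by
  rw [inI_iff_div] at ha hb
  exact ha.symm.trans hb

lemma inI_ancestor {w k ip : ℕ} {q : ℕ × ℕ} (hk : k ≤ q.2) (hq : q.2 ≤ w) (h : inI w q ip) :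
    inI w (q.1 / 2 ^ (q.2 - k), k) ip := by
  rw [inI_iff_div] at h ⊢
  rw [← h, Nat.div_div_eq_div_mul, ← pow_add]
  congr 2
  omega

lemma inI_iff_left_or_right {w p l ip : ℕ} (hl : l < w) :
    inI w (p, l) ip ↔ inI w (2 * p, l + 1) ip ∨ inI w (2 * p + 1, l + 1) ip := by
  have h : ip / 2 ^ (w - l) = ip / 2 ^ (w - (l + 1)) / 2 := by
    rw [Nat.div_div_eq_div_mul, ← pow_succ]
    congr 2
    omega
  simp only [inI_iff_div, h]
  omega

lemma not_inI_left_and_right {w p l ip : ℕ} :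
    ¬(inI w (2 * p, l + 1) ip ∧ inI w (2 * p + 1, l + 1) ip) := fun ⟨hL, hR⟩ => by
  have := eq_of_inI_of_inI hL hR
  omega

lemma pow_le_pow_of_inI_subset {w : ℕ} {q D : ℕ × ℕ} (h : ∀ ip, inI w q ip → inI w D ip) :
    2 ^ (w - q.2) ≤ 2 ^ (w - D.2) := by
  have hsub : Finset.Ico (q.1 * 2 ^ (w - q.2)) ((q.1 + 1) * 2 ^ (w - q.2)) ⊆
      Finset.Ico (D.1 * 2 ^ (w - D.2)) ((D.1 + 1) * 2 ^ (w - D.2)) := by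
    intro ip; simpa [inI] using h ip
  simpa [add_one_mul] using Finset.card_le_card hsub

lemma eq_or_subset_left_or_subset_right {w p l : ℕ} (hl : l < w) {q : ℕ × ℕ}
    (hq : q.2 ≤ w) (hsub : ∀ ip, inI w q ip → inI w (p, l) ip) :
    q = (p, l) ∨ (∀ ip, inI w q ip → inI w (2 * p, l + 1) ip) ∨
      (∀ ip, inI w q ip → inI w (2 * p + 1, l + 1) ip) := by
  obtain ⟨a, k⟩ := q
  have hlk : l ≤ k := by
    have := (Nat.pow_le_pow_iff_right one_lt_two).1 (pow_le_pow_of_inI_subset hsub)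
    simp only at this hq
    omega
  have hstart := inI_start w (a, k)
  rcases hlk.eq_or_lt with rfl | hlk
  · exact Or.inl (by rw [eq_of_inI_of_inI hstart (hsub _ hstart)])
  · right
    have hanc := fun ip => inI_ancestor (ip := ip) (show l + 1 ≤ (a, k).2 from hlk) hq
    rcases (inI_iff_left_or_right hl).1 (hsub _ hstart) with h | h
    · exact Or.inl fun ip hip => eq_of_inI_of_inI (hanc _ hstart) h ▸ hanc ip hip
    · exact Or.inr fun ip hip => eq_of_inI_of_inI (hanc _ hstart) h ▸ hanc ip hip

lemma gN_eq_left_add_right {w p l : ℕ} (hl : l < w) (A : Finset ℕ) (f : ℕ → ℕ) :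
    gN w A f (p, l) = gN w A f (2 * p, l + 1) + gN w A f (2 * p + 1, l + 1) := by
  unfold gN
  rw [← Finset.sum_union
      (Finset.disjoint_filter.2 fun _ _ hL hR => not_inI_left_and_right ⟨hL, hR⟩),
    ← Finset.filter_or]
  exact Finset.sum_congr (Finset.filter_congr fun _ _ => inI_iff_left_or_right hl) fun _ _ => rfl

lemma PairwiseDisjointI.mono {w : ℕ} {S T : Finset (ℕ × ℕ)} (hTS : T ⊆ S)
    (hS : PairwiseDisjointI w S) : PairwiseDisjointI w T :=
  fun q hq q' hq' => hS q (hTS hq) q' (hTS hq')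

lemma sum_gN_le {w : ℕ} {S : Finset (ℕ × ℕ)} {D : ℕ × ℕ} (A : Finset ℕ) (f : ℕ → ℕ)
    (hsub : ∀ q ∈ S, ∀ ip, inI w q ip → inI w D ip) (hS : PairwiseDisjointI w S) :
    ∑ q ∈ S, gN w A f q ≤ gN w A f D := by
  classical
  unfold gN
  rw [← Finset.sum_biUnion fun q hq q' hq' hne => Finset.disjoint_filter.2
    fun ip _ h h' => hS q hq q' hq' hne ip ⟨h, h'⟩]
  refine Finset.sum_le_sum_of_subset fun ip hip => ?_
  simp only [Finset.mem_biUnion, Finset.mem_filter] at hip ⊢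
  obtain ⟨q, hq, hipA, hipq⟩ := hip
  exact ⟨hipA, hsub q hq ip hipq⟩

section Flooding

variable (w : ℕ) (BL WL : Finset ℕ) (bw wgt : ℕ → ℕ)

def trafficN (q : ℕ × ℕ) : ℕ := gN w WL wgt q + gN w BL bw q

structure FloodingFeasible (D : ℕ × ℕ) (F c : ℕ) (S : Finset (ℕ × ℕ)) : Prop where
  valid : ∀ q ∈ S, ValidPrefix w q
  subset : ∀ q ∈ S, ∀ ip, inI w q ip → inI w D ip
  card_le : S.card ≤ F
  pairwiseDisjoint : PairwiseDisjointI w S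
  unblocked_le : trafficN w BL WL bw wgt D - ∑ q ∈ S, trafficN w BL WL bw wgt q ≤ c

variable {w BL WL bw wgt}

lemma trafficN_eq_left_add_right {p l : ℕ} (hl : l < w) :
    trafficN w BL WL bw wgt (p, l) =
      trafficN w BL WL bw wgt (2 * p, l + 1) + trafficN w BL WL bw wgt (2 * p + 1, l + 1) := by
  simp only [trafficN, gN_eq_left_add_right hl]
  ring

lemma sum_trafficN_le {S : Finset (ℕ × ℕ)} {D : ℕ × ℕ}
    (hsub : ∀ q ∈ S, ∀ ip, inI w q ip → inI w D ip) (hS : PairwiseDisjointI w S) :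
    ∑ q ∈ S, trafficN w BL WL bw wgt q ≤ trafficN w BL WL bw wgt D := by
  simp only [trafficN, Finset.sum_add_distrib]
  exact add_le_add (sum_gN_le WL wgt hsub hS) (sum_gN_le BL bw hsub hS)

variable {D : ℕ × ℕ} {F c : ℕ}

lemma zF_le_of_feasible {S : Finset (ℕ × ℕ)} (hS : FloodingFeasible w BL WL bw wgt D F c S) :
    zF w BL WL bw wgt D F c ≤ (∑ q ∈ S, gN w WL wgt q : ℕ) :=
  sInf_le ⟨S, fun q hq => ⟨hS.valid q hq, hS.subset q hq⟩, hS.card_le, hS.pairwiseDisjoint,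
    hS.unblocked_le, rfl⟩

lemma le_zF {x : WithTop ℕ}
    (h : ∀ S, FloodingFeasible w BL WL bw wgt D F c S → x ≤ (∑ q ∈ S, gN w WL wgt q : ℕ)) :
    x ≤ zF w BL WL bw wgt D F c :=
  le_sInf fun _ ⟨S, hS, hcard, hdisj, hunb, hx⟩ =>
    hx ▸ h S ⟨fun q hq => (hS q hq).1, fun q hq => (hS q hq).2, hcard, hdisj, hunb⟩

lemma exists_feasible_of_zF_ne_top (h : zF w BL WL bw wgt D F c ≠ ⊤) :
    ∃ S, FloodingFeasible w BL WL bw wgt D F c S ∧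
      zF w BL WL bw wgt D F c = (∑ q ∈ S, gN w WL wgt q : ℕ) := by
  have sInf_mem_of_ne_top (s : Set (WithTop ℕ)) (hs : sInf s ≠ ⊤) : sInf s ∈ s :=
    csInf_mem (Set.nonempty_iff_ne_empty.2 fun he => hs (by rw [he, sInf_empty]))
  obtain ⟨S, hS, hcard, hdisj, hunb, hx⟩ := sInf_mem_of_ne_top _ h
  exact ⟨S, ⟨fun q hq => (hS q hq).1, fun q hq => (hS q hq).2, hcard, hdisj, hunb⟩, hx⟩

lemma zF_le_gN (hD : ValidPrefix w D) (hF : 1 ≤ F) :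
    zF w BL WL bw wgt D F c ≤ gN w WL wgt D := by
  simpa using zF_le_of_feasible (S := {D})
    ⟨by simpa using hD, by simp, by simpa using hF, fun q hq q' hq' hne => by simp_all, by simp⟩

lemma disjoint_of_inI_subset_halves {p l : ℕ} {SL SR : Finset (ℕ × ℕ)}
    (hSL : ∀ q ∈ SL, ∀ ip, inI w q ip → inI w (2 * p, l + 1) ip)
    (hSR : ∀ q ∈ SR, ∀ ip, inI w q ip → inI w (2 * p + 1, l + 1) ip) : Disjoint SL SR :=
  Finset.disjoint_left.2 fun q hqL hqR =>
    not_inI_left_and_right ⟨hSL q hqL _ (inI_start w q), hSR q hqR _ (inI_start w q)⟩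

variable {p l : ℕ}

lemma FloodingFeasible.union (hl : l < w) {F₁ F₂ c₁ c₂ : ℕ} {SL SR : Finset (ℕ × ℕ)}
    (hL : FloodingFeasible w BL WL bw wgt (2 * p, l + 1) F₁ c₁ SL)
    (hR : FloodingFeasible w BL WL bw wgt (2 * p + 1, l + 1) F₂ c₂ SR) :
    FloodingFeasible w BL WL bw wgt (p, l) (F₁ + F₂) (c₁ + c₂) (SL ∪ SR) := by
  have hLR := disjoint_of_inI_subset_halves hL.subset hR.subset
  refine ⟨fun q hq => ?_, fun q hq ip hip => ?_, ?_, ?_, ?_⟩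
  · rcases Finset.mem_union.1 hq with hq | hq
    exacts [hL.valid q hq, hR.valid q hq]
  · rw [inI_iff_left_or_right hl]
    rcases Finset.mem_union.1 hq with hq | hq
    exacts [Or.inl (hL.subset q hq ip hip), Or.inr (hR.subset q hq ip hip)]
  · have := Finset.card_union_le SL SR
    have := hL.card_le
    have := hR.card_le
    omega
  · intro q hq q' hq' hne ip ⟨hip, hip'⟩
    rcases Finset.mem_union.1 hq with hq | hq <;> rcases Finset.mem_union.1 hq' with hq' | hq'
    · exact hL.pairwiseDisjoint q hq q' hq' hne ip ⟨hip, hip'⟩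
    · exact not_inI_left_and_right ⟨hL.subset q hq ip hip, hR.subset q' hq' ip hip'⟩
    · exact not_inI_left_and_right ⟨hL.subset q' hq' ip hip', hR.subset q hq ip hip⟩
    · exact hR.pairwiseDisjoint q hq q' hq' hne ip ⟨hip, hip'⟩
  · have := hL.unblocked_le
    have := hR.unblocked_le
    rw [trafficN_eq_left_add_right hl, Finset.sum_union hLR]
    omega

lemma zF_le_zF_add_zF (hl : l < w) {n m : ℕ} (hn : n ≤ F) (hm : m ≤ c) :
    zF w BL WL bw wgt (p, l) F c ≤
      zF w BL WL bw wgt (2 * p, l + 1) (F - n) (c - m) +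
        zF w BL WL bw wgt (2 * p + 1, l + 1) n m := by
  rcases eq_or_ne (zF w BL WL bw wgt (2 * p, l + 1) (F - n) (c - m)) ⊤ with hL | hL
  · simp [hL]
  rcases eq_or_ne (zF w BL WL bw wgt (2 * p + 1, l + 1) n m) ⊤ with hR | hR
  · simp [hR]
  obtain ⟨SL, hSL, hL⟩ := exists_feasible_of_zF_ne_top hL
  obtain ⟨SR, hSR, hR⟩ := exists_feasible_of_zF_ne_top hR
  have hS := hSL.union hl hSR
  rw [Nat.sub_add_cancel hn, Nat.sub_add_cancel hm] at hS
  calc zF w BL WL bw wgt (p, l) F c ≤ (∑ q ∈ SL ∪ SR, gN w WL wgt q : ℕ) := zF_le_of_feasible hS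
    _ = _ := by
      rw [Finset.sum_union (disjoint_of_inI_subset_halves hSL.subset hSR.subset),
        Nat.cast_add, hL, hR]

lemma FloodingFeasible.exists_zF_add_zF_le (hl : l < w) {S : Finset (ℕ × ℕ)}
    (hS : FloodingFeasible w BL WL bw wgt (p, l) F c S) (hD : (p, l) ∉ S) :
    ∃ n ≤ F, ∃ m ≤ c,
      zF w BL WL bw wgt (2 * p, l + 1) (F - n) (c - m) +
          zF w BL WL bw wgt (2 * p + 1, l + 1) n m ≤ (∑ q ∈ S, gN w WL wgt q : ℕ) := by
  classical
  let InLeft (q : ℕ × ℕ) : Prop := ∀ ip, inI w q ip → inI w (2 * p, l + 1) ip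
  set SL := S.filter InLeft
  set SR := S.filter fun q => ¬InLeft q
  have hSL : ∀ q ∈ SL, ∀ ip, inI w q ip → inI w (2 * p, l + 1) ip :=
    fun q hq => (Finset.mem_filter.1 hq).2
  have hSR : ∀ q ∈ SR, ∀ ip, inI w q ip → inI w (2 * p + 1, l + 1) ip := fun q hq => by
    obtain ⟨hqS, hqL⟩ := Finset.mem_filter.1 hq
    rcases eq_or_subset_left_or_subset_right hl (hS.valid q hqS).1 (hS.subset q hqS) with
      rfl | h | h
    exacts [absurd hqS hD, absurd h hqL, h]
  have hdL : PairwiseDisjointI w SL := hS.pairwiseDisjoint.mono (Finset.filter_subset _ _)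
  have hdR : PairwiseDisjointI w SR := hS.pairwiseDisjoint.mono (Finset.filter_subset _ _)
  have hsplit (f : ℕ × ℕ → ℕ) : ∑ q ∈ SL, f q + ∑ q ∈ SR, f q = ∑ q ∈ S, f q :=
    Finset.sum_filter_add_sum_filter_not S InLeft f
  have hTL := sum_trafficN_le (BL := BL) (WL := WL) (bw := bw) (wgt := wgt) hSL hdL
  have hTR := sum_trafficN_le (BL := BL) (WL := WL) (bw := bw) (wgt := wgt) hSR hdR
  have hunb := hS.unblocked_le
  have hcard : SL.card + SR.card ≤ F :=
    (Finset.card_filter_add_card_filter_not InLeft).trans_le hS.card_le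
  rw [trafficN_eq_left_add_right hl, ← hsplit] at hunb
  set m := trafficN w BL WL bw wgt (2 * p + 1, l + 1) - ∑ q ∈ SR, trafficN w BL WL bw wgt q
  have hL : FloodingFeasible w BL WL bw wgt (2 * p, l + 1) (F - SR.card) (c - m) SL :=
    ⟨fun q hq => hS.valid q (Finset.filter_subset _ _ hq), hSL, by omega, hdL, by omega⟩
  have hR : FloodingFeasible w BL WL bw wgt (2 * p + 1, l + 1) SR.card m SR :=
    ⟨fun q hq => hS.valid q (Finset.filter_subset _ _ hq), hSR, le_rfl, hdR, le_rfl⟩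
  refine ⟨SR.card, by omega, m, by omega, ?_⟩
  rw [← hsplit, Nat.cast_add]
  exact add_le_add (zF_le_of_feasible hL) (zF_le_of_feasible hR)

end Flooding

/-- FLOODING dynamic-programming recursion: for `F ≥ 1` and `D` not a single address,
`z_D(F, c) = min(g_D, min over n ≤ F, m ≤ c of z_{D_L}(F−n, c−m) + z_{D_R}(n, m))`. -/
theorem stmt16 (w p l F c : ℕ) (BL WL : Finset ℕ) (bw wgt : ℕ → ℕ)
    (hl : l < w) (hp : p < 2 ^ l) (hF : 1 ≤ F) :
    zF w BL WL bw wgt (p, l) F c =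
      min ((gN w WL wgt (p, l) : WithTop ℕ))
        (sInf {x : WithTop ℕ | ∃ n ≤ F, ∃ m ≤ c,
          x = zF w BL WL bw wgt (2 * p, l + 1) (F - n) (c - m) +
              zF w BL WL bw wgt (2 * p + 1, l + 1) n m}) := by
  refine le_antisymm (le_min (zF_le_gN ⟨hl.le, hp⟩ hF) (le_sInf ?_)) (le_zF fun S hS => ?_)
  · rintro _ ⟨n, hn, m, hm, rfl⟩
    exact zF_le_zF_add_zF hl hn hm
  · by_cases hD : (p, l) ∈ S
    · exact min_le_of_left_le <| WithTop.coe_le_coe.2 <|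
        Finset.single_le_sum (fun q _ => Nat.zero_le (gN w WL wgt q)) hD
    · obtain ⟨n, hn, m, hm, hle⟩ := hS.exists_zF_add_zF_le hl hD
      refine min_le_of_right_le ((sInf_le ?_).trans hle)
      exact ⟨n, hn, m, hm, rfl⟩
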